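/- arXiv:1108.1776 — 2 statements merged into one kernel-verified Lean document; each statement's English description precedes it below -/
import Mathlib

section
/- Let (W,S) be a finite Coxeter system of rank n with Coxeter element c = c₁⋯c_n and c-sorting word w₀(c) of the longest element. Let Q = c^k·w₀(c) = (q₁,…,q_{kn+N}) and, for each index i, set t_i = q₁q₂⋯q_{i-1}·q_i·q_{i-1}⋯q₂q₁. Then a set of positions {ℓ₁ < ℓ₂ < … < ℓ_{kn}} is a facet of the subword complex Δ(Q, w₀) if and only if t_{ℓ_{kn}} ⋯ t_{ℓ₂} t_{ℓ₁} = c^k. -/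
open List

namespace SubwordComplex

variable {B : Type*} [DecidableEq B] [Inhabited B] {W : Type*} [Group W]
variable {M : CoxeterMatrix B} (cs : CoxeterSystem M W)

/-- The word formed by the letters of `Q` at positions not in `F`. -/
def complement (Q : List B) (F : Finset ℕ) : List B :=
  (((List.range Q.length).zip Q).filter (fun p => p.1 ∉ F)).map Prod.snd

/-- `L` contains a reduced expression for `π` as a subword. -/
def ContainsReduced (L : List B) (π : W) : Prop :=
  ∃ L' : List B, L'.Sublist L ∧ cs.IsReduced L' ∧ cs.wordProd L' = π

/-- `F` is a face of the subword complex `Δ(Q, π)`. -/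
def IsFace (Q : List B) (π : W) (F : Finset ℕ) : Prop :=
  F ⊆ Finset.range Q.length ∧ ContainsReduced cs (complement Q F) π

/-- `F` is a facet (maximal face) of the subword complex `Δ(Q, π)`. -/
def IsFacet (Q : List B) (π : W) (F : Finset ℕ) : Prop :=
  IsFace cs Q π F ∧ ∀ F' : Finset ℕ, IsFace cs Q π F' → F ⊆ F' → F' = F

/-- `w₀` is the longest element. -/
def IsLongest (w₀ : W) : Prop := ∀ w : W, cs.length w ≤ cs.length w₀

/-- The Demazure product of a word. -/
noncomputable def demazure (Q : List B) : W :=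
  Q.foldl (fun w i => if cs.length w < cs.length (w * cs.simple i) then w * cs.simple i
    else w) 1

/-- A reduced word for a Coxeter element: each generator appears exactly once. -/
def IsCoxeterWord (c : List B) : Prop := c.Nodup ∧ ∀ b : B, b ∈ c

/-- The letter of the infinite word `c^∞` at position `i`. -/
def cInfLetter (c : List B) (i : ℕ) : B := c.getD (i % c.length) default

/-- `P` is the lexicographically first increasing list of positions in `c^∞` whose
associated word is a reduced word for `w`. -/
def IsSortingIndices (c : List B) (w : W) (P : List ℕ) : Prop :=
  P.Chain' (· < ·) ∧ cs.IsReduced (P.map (cInfLetter c)) ∧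
    cs.wordProd (P.map (cInfLetter c)) = w ∧
    ∀ P' : List ℕ, P'.Chain' (· < ·) → cs.IsReduced (P'.map (cInfLetter c)) →
      cs.wordProd (P'.map (cInfLetter c)) = w → P = P' ∨ List.Lex (· < ·) P P'

/-- `sw` is the `c`-sorting word of `w`. -/
def IsSortingWord (c : List B) (w : W) (sw : List B) : Prop :=
  ∃ P : List ℕ, IsSortingIndices cs c w P ∧ sw = P.map (cInfLetter c)

/-- One step of interchanging two adjacent commuting letters. -/
def CommStep (L L' : List B) : Prop :=
  ∃ (u v : List B) (a b : B),
    cs.simple a * cs.simple b = cs.simple b * cs.simple a ∧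
    L = u ++ a :: b :: v ∧ L' = u ++ b :: a :: v

/-- Two words coincide up to commutations. -/
def CommEquiv (L L' : List B) : Prop := Relation.EqvGen (CommStep cs) L L'

/-- The (combinatorial model of the) root `w(α_s)`: a pair consisting of the
reflection `w s w⁻¹` and a sign which is `true` if the root is positive. -/
noncomputable def rootPair (w : W) (s : B) : W × Bool :=
  (w * cs.simple s * w⁻¹, decide (cs.length w < cs.length (w * cs.simple s)))

/-- The negative of a root in the combinatorial model. -/
def negRoot (r : W × Bool) : W × Bool := (r.1, !r.2)

/-- The product of the letters of `Q \ F` occurring strictly before position `q`. -/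
def prefixProd (Q : List B) (F : Finset ℕ) (q : ℕ) : W :=
  cs.wordProd ((((List.range Q.length).zip Q).filter (fun p => p.1 ∉ F ∧ p.1 < q)).map Prod.snd)

/-- The root function `r_F` of a facet `F`, in the combinatorial model. -/
noncomputable def rootF (Q : List B) (F : Finset ℕ) (q : ℕ) : W × Bool :=
  rootPair cs (prefixProd cs Q F q) (Q.getD q default)

/-! The product of the letters of `Q` factors as `t_{ℓ_m} ⋯ t_{ℓ_1}` times the product of the
remaining letters: removing the last chosen position `ℓ_m` from `Q` leaves `t_{ℓ_1}, …, t_{ℓ_{m-1}}`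
unchanged and turns `π Q` into `t_{ℓ_m} · π Q`. For `Q = c^k w₀(c)` and `|F| = kn` the remaining word
has length `N = ℓ(w₀)`, so `F` is a facet exactly when those letters multiply to `w₀`, i.e. exactly
when `t_{ℓ_m} ⋯ t_{ℓ_1} = π Q · w₀⁻¹ = c^k`. -/

theorem _root_.Finset.subset_range_of_subset_range_succ {F : Finset ℕ} {n : ℕ}
    (hF : F ⊆ Finset.range (n + 1)) (hn : n ∉ F) : F ⊆ Finset.range n := fun i hi => by
  have hin : i ≠ n := fun h => hn (h ▸ hi)
  have := Finset.mem_range.mp (hF hi)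
  exact Finset.mem_range.mpr (by omega)

theorem _root_.Finset.sort_insert_of_forall_lt {α : Type*} [LinearOrder α] {s : Finset α} {a : α}
    (h : ∀ b ∈ s, b < a) : (insert a s).sort (· ≤ ·) = s.sort (· ≤ ·) ++ [a] := by
  have hnodup : (s.sort (· ≤ ·) ++ [a]).Nodup :=
    List.nodup_append.mpr ⟨s.sort_nodup _, List.nodup_singleton a,
      fun b hb x hx => List.eq_of_mem_singleton hx ▸ (h b ((Finset.mem_sort _).mp hb)).ne⟩
  have hsorted : (s.sort (· ≤ ·) ++ [a]).Pairwise (· ≤ ·) :=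
    List.pairwise_append.mpr ⟨s.pairwise_sort _, List.pairwise_singleton _ a,
      fun b hb x hx => List.eq_of_mem_singleton hx ▸ (h b ((Finset.mem_sort _).mp hb)).le⟩
  have hset : insert a s = (s.sort (· ≤ ·) ++ [a]).toFinset := by
    ext b; simp
  rw [hset, List.toFinset_sort _ hnodup]
  exact hsorted

section

omit [DecidableEq B] [Inhabited B]

theorem complement_concat (Q : List B) (b : B) (F : Finset ℕ) :
    complement (Q ++ [b]) F = complement Q F ++ if Q.length ∈ F then [] else [b] := by
  have hzip : (List.range (Q ++ [b]).length).zip (Q ++ [b])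
      = (List.range Q.length).zip Q ++ [(Q.length, b)] := by
    rw [List.length_append, List.length_singleton, List.range_succ,
      List.zip_append List.length_range]
    rfl
  unfold complement
  rw [hzip, List.filter_append, List.map_append]
  split_ifs <;> simp [*]

theorem complement_erase_of_length_le (Q : List B) (F : Finset ℕ) {a : ℕ} (ha : Q.length ≤ a) :
    complement Q (F.erase a) = complement Q F := by
  unfold complement
  congr 1
  refine List.filter_congr fun p hp => ?_
  have hp : p.1 < Q.length := List.mem_range.mp (List.of_mem_zip hp).1
  simp [Finset.mem_erase, (hp.trans_le ha).ne]

theorem length_complement_add_card {Q : List B} {F : Finset ℕ}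
    (hF : F ⊆ Finset.range Q.length) : (complement Q F).length + F.card = Q.length := by
  induction Q using List.reverseRecOn generalizing F with
  | nil => simp_all [complement]
  | append_singleton Q b ih =>
    rw [List.length_append, List.length_singleton] at hF
    rw [complement_concat, List.length_append]
    by_cases hn : Q.length ∈ F
    · have hsub : F.erase Q.length ⊆ Finset.range Q.length :=
        Finset.subset_range_of_subset_range_succ ((F.erase_subset _).trans hF) (F.notMem_erase _)
      have := ih hsub
      rw [complement_erase_of_length_le _ _ le_rfl, Finset.card_erase_of_mem hn] at this
      have hpos := Finset.card_pos.mpr ⟨_, hn⟩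
      rw [if_pos hn, List.length_nil, List.length_append, List.length_singleton]
      omega
    · have hsub : F ⊆ Finset.range Q.length := Finset.subset_range_of_subset_range_succ hF hn
      rw [if_neg hn, List.length_singleton, List.length_append, List.length_singleton, ← ih hsub]
      omega

theorem IsFace.card_add_length_le {Q : List B} {π : W} {F : Finset ℕ} (hF : IsFace cs Q π F) :
    F.card + cs.length π ≤ Q.length := by
  obtain ⟨hsub, L, hL, hred, rfl⟩ := hF
  rw [← length_complement_add_card hsub, hred]
  have := hL.length_le
  omega

theorem isFacet_iff_wordProd_complement {Q : List B} {π : W} {F : Finset ℕ}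
    (hF : F ⊆ Finset.range Q.length) (hlen : (complement Q F).length = cs.length π) :
    IsFacet cs Q π F ↔ cs.wordProd (complement Q F) = π := by
  constructor
  · rintro ⟨⟨-, L, hL, hred, rfl⟩, -⟩
    rw [hL.eq_of_length (hred.symm.trans hlen.symm)]
  · intro hprod
    have hface : IsFace cs Q π F :=
      ⟨hF, complement Q F, List.Sublist.refl _, by rw [CoxeterSystem.IsReduced, hprod, hlen], hprod⟩
    refine ⟨hface, fun F' hF' hFF' => ?_⟩
    refine (Finset.eq_of_subset_of_card_le hFF' ?_).symm
    have := hF'.card_add_length_le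
    have := length_complement_add_card hF
    omega

theorem wordProd_flatten_replicate (c : List B) (k : ℕ) :
    cs.wordProd (List.replicate k c).flatten = cs.wordProd c ^ k := by
  induction k with
  | zero => simp
  | succ k ih => rw [List.replicate_succ', List.flatten_concat, cs.wordProd_append, ih, pow_succ]

end

section

omit [DecidableEq B]

/-- The reflection `t_l = q₁ ⋯ q_{l-1} q_l q_{l-1} ⋯ q₁` of the word `Q` at the
(zero-based) position `l`. -/
def reflectionAt (Q : List B) (l : ℕ) : W :=
  cs.wordProd (Q.take l) * cs.simple (Q.getD l default) * (cs.wordProd (Q.take l))⁻¹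

theorem reflectionAt_append_of_lt {Q : List B} {l : ℕ} (R : List B) (hl : l < Q.length) :
    reflectionAt cs (Q ++ R) l = reflectionAt cs Q l := by
  rw [reflectionAt, reflectionAt, List.take_append_of_le_length hl.le,
    List.getD_append _ _ _ _ hl]

theorem reflectionAt_concat_length_mul_wordProd (Q : List B) (b : B) :
    reflectionAt cs (Q ++ [b]) Q.length * cs.wordProd Q = cs.wordProd (Q ++ [b]) := by
  rw [reflectionAt, List.take_append_of_le_length le_rfl, List.take_length,
    List.getD_append_right _ _ _ _ le_rfl, Nat.sub_self, cs.wordProd_append,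
    cs.wordProd_singleton]
  simp

theorem prod_reflectionAt_mul_wordProd_complement {Q : List B} {F : Finset ℕ}
    (hF : F ⊆ Finset.range Q.length) :
    ((F.sort (· ≤ ·)).map (reflectionAt cs Q)).reverse.prod * cs.wordProd (complement Q F)
      = cs.wordProd Q := by
  induction Q using List.reverseRecOn generalizing F with
  | nil => simp_all [complement]
  | append_singleton Q b ih =>
    rw [List.length_append, List.length_singleton] at hF
    have hlt : ∀ {s : Finset ℕ}, s ⊆ Finset.range Q.length → ∀ l ∈ s.sort (· ≤ ·), l < Q.length :=
      fun hs l hl => Finset.mem_range.mp (hs ((Finset.mem_sort _).mp hl))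
    have hmap : ∀ {s : Finset ℕ}, s ⊆ Finset.range Q.length →
        (s.sort (· ≤ ·)).map (reflectionAt cs (Q ++ [b])) = (s.sort (· ≤ ·)).map (reflectionAt cs Q) :=
      fun hs => List.map_congr_left fun l hl => reflectionAt_append_of_lt cs [b] (hlt hs l hl)
    rw [complement_concat]
    by_cases hn : Q.length ∈ F
    · have hsub : F.erase Q.length ⊆ Finset.range Q.length :=
        Finset.subset_range_of_subset_range_succ ((F.erase_subset _).trans hF) (F.notMem_erase _)
      have hsort : F.sort (· ≤ ·) = (F.erase Q.length).sort (· ≤ ·) ++ [Q.length] := by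
        rw [← Finset.sort_insert_of_forall_lt fun l hl => Finset.mem_range.mp (hsub hl),
          Finset.insert_erase hn]
      rw [hsort, List.map_append, hmap hsub, List.reverse_append, List.prod_append, if_pos hn,
        List.append_nil, ← complement_erase_of_length_le Q F le_rfl, List.map_singleton,
        List.reverse_singleton, List.prod_singleton, mul_assoc, ih hsub,
        reflectionAt_concat_length_mul_wordProd]
    · have hsub : F ⊆ Finset.range Q.length := Finset.subset_range_of_subset_range_succ hF hn
      rw [hmap hsub, if_neg hn, cs.wordProd_append, ← mul_assoc, ih hsub, cs.wordProd_append]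

end

theorem facet_iff_reflection_product (w₀ : W)
    (c : List B) (k : ℕ)
    (wc : List B) (hwc : IsSortingWord cs c w₀ wc)
    (Q : List B) (hQdef : Q = List.flatten (List.replicate k c) ++ wc)
    (F : Finset ℕ) (hFsub : F ⊆ Finset.range Q.length) (hFcard : F.card = k * c.length) :
    IsFacet cs Q w₀ F ↔
      ((F.sort (· ≤ ·)).map (fun l =>
        cs.wordProd (Q.take l) * cs.simple (Q.getD l default) *
          (cs.wordProd (Q.take l))⁻¹)).reverse.prod = (cs.wordProd c) ^ k := by
  obtain ⟨P, ⟨-, hred, hprod, -⟩, rfl⟩ := hwc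
  set wc := P.map (cInfLetter c)
  have hQ : cs.wordProd Q = cs.wordProd c ^ k * w₀ := by
    rw [hQdef, cs.wordProd_append, hprod, wordProd_flatten_replicate]
  have hlen : (complement Q F).length = cs.length w₀ := by
    have hQlen : Q.length = k * c.length + wc.length := by
      rw [hQdef, List.length_append, List.length_flatten, List.map_replicate, List.sum_replicate,
        smul_eq_mul]
    have := length_complement_add_card hFsub
    rw [← hprod, hred]
    omega
  rw [isFacet_iff_wordProd_complement cs hFsub hlen]
  have hfactor := prod_reflectionAt_mul_wordProd_complement cs hFsub
  rw [hQ] at hfactor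
  exact ⟨fun h => mul_right_cancel (h ▸ hfactor), fun h => mul_left_cancel (h ▸ hfactor)⟩

end SubwordComplex
end

section
/- Every word Q = (q₁,…,q_r) in the generators S of a finite Coxeter group W of rank n can be embedded as a subword of Q' = c^k·w₀(c) for any k ≥ r, by placing the i-th letter of Q within the i-th copy of c. If furthermore δ(Q) = w₀, then the set of positions Q' \ Q is a face of the multi-cluster complex Δ(Q', w₀), and the link of this face in Δ(Q', w₀) is isomorphic to the subword complex Δ(Q, w₀). -/
/-!
Placing the `i`-th letter of `Q` in the `i`-th copy of `c` embeds `Q` into `Q'` position by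
position, so deleting from `Q'` the positions `G` off the image, together with the image of `F`,
leaves exactly the word `Q` with the positions `F` deleted. Hence `F` and `G ∪ emb F` impose the
same condition on the same word, and `Δ(Q, w₀)` is the link of `G`. Finally `G` is a face because
every word contains a reduced word for its Demazure product.
-/

open List

theorem List.getD_flatten_replicate_append {α : Type*} (c L : List α) (d : α) :
    ∀ {i k j : ℕ}, i < k → j < c.length →
      ((List.replicate k c).flatten ++ L).getD (i * c.length + j) d = c.getD j d
  | _, 0, _, hik, _ => absurd hik (Nat.not_lt_zero _)
  | 0, _ + 1, _, _, hj => by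
    rw [List.replicate_succ, List.flatten_cons, List.append_assoc, Nat.zero_mul, Nat.zero_add,
      List.getD_append _ _ _ _ hj]
  | i + 1, k + 1, j, hik, hj => by
    rw [List.replicate_succ, List.flatten_cons, List.append_assoc, Nat.succ_mul, Nat.add_right_comm,
      List.getD_append_right _ _ _ _ (Nat.le_add_left _ _), Nat.add_sub_cancel]
    exact List.getD_flatten_replicate_append c L d (Nat.lt_of_succ_lt_succ hik) hj

theorem Nat.strictMono_mul_add {n : ℕ} {f : ℕ → ℕ} (hf : ∀ i, f i < n) :
    StrictMono fun i => i * n + f i := fun i j hij =>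
  calc i * n + f i < j * n := by
        simpa only [Nat.mul_comm n] using Nat.mul_add_lt_mul_of_lt_of_lt hij (hf i)
    _ ≤ j * n + f j := Nat.le_add_right _ _

namespace SubwordComplex

section Complement

variable {α : Type*} [Inhabited α]

theorem complement_eq_map_getD (Q : List α) (F : Finset ℕ) :
    complement Q F = ((range Q.length).filter (· ∉ F)).map (Q.getD · default) := by
  have hzip : (range Q.length).zip Q = (range Q.length).map (fun i => (i, Q.getD i default)) := by
    refine ext_getElem (by simp) fun j h _ => ?_
    simp only [length_zip, length_range, min_self] at h
    simp [h]
  rw [complement, hzip, filter_map, map_map]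
  rfl

theorem complement_empty (Q : List α) : complement Q ∅ = Q := by
  rw [complement_eq_map_getD]
  refine ext_getElem (by simp) fun j _ h => ?_
  simp [h]

theorem complement_sdiff_image_union_image {Q Q' : List α} {emb : ℕ → ℕ} (hmono : StrictMono emb)
    (hlt : ∀ i < Q.length, emb i < Q'.length)
    (hletter : ∀ i < Q.length, Q'.getD (emb i) default = Q.getD i default) (F : Finset ℕ) :
    complement Q'
        (Finset.range Q'.length \ (Finset.range Q.length).image emb ∪ F.image emb) =
      complement Q F := by
  have hpos : (range Q'.length).filter
        (· ∉ Finset.range Q'.length \ (Finset.range Q.length).image emb ∪ F.image emb) =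
      ((range Q.length).filter (· ∉ F)).map emb := by
    refine Pairwise.eq_of_mem_iff (pairwise_lt_range.sublist filter_sublist)
      ((pairwise_lt_range.sublist filter_sublist).map emb fun _ _ h => hmono h) fun j => ?_
    simp only [mem_filter, mem_range, mem_map, Finset.mem_union, Finset.mem_sdiff,
      Finset.mem_range, Finset.mem_image, decide_eq_true_eq]
    constructor
    · rintro ⟨hj, hnot⟩
      push Not at hnot
      obtain ⟨i, hi, rfl⟩ := hnot.1 hj
      exact ⟨i, ⟨hi, fun hiF => hnot.2 i hiF rfl⟩, rfl⟩
    · rintro ⟨i, ⟨hi, hiF⟩, rfl⟩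
      refine ⟨hlt i hi, ?_⟩
      push Not
      exact ⟨fun _ => ⟨i, hi, rfl⟩, fun i' hi' h => hiF (hmono.injective h ▸ hi')⟩
  rw [complement_eq_map_getD, complement_eq_map_getD, hpos, map_map]
  exact map_congr_left fun i hi => hletter i (mem_range.mp (mem_filter.mp hi).1)

end Complement

section Faces

variable {B : Type*} {W : Type*} [Group W] {M : CoxeterMatrix B} (cs : CoxeterSystem M W)

theorem containsReduced_demazure (Q : List B) : ContainsReduced cs Q (demazure cs Q) := by
  induction Q using reverseRecOn with
  | nil => exact ⟨[], nil_sublist _, by simp [CoxeterSystem.IsReduced], by simp [demazure]⟩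
  | append_singleton Q s ih =>
    obtain ⟨L, hsub, hred, hprod⟩ := ih
    have hstep : demazure cs (Q ++ [s]) =
        if cs.length (demazure cs Q) < cs.length (demazure cs Q * cs.simple s)
        then demazure cs Q * cs.simple s else demazure cs Q := by
      rw [demazure, demazure, foldl_append]
      rfl
    rw [hstep]
    split_ifs with hlt
    · refine ⟨L ++ [s], hsub.append (Sublist.refl [s]), ?_, by
        rw [cs.wordProd_append, cs.wordProd_singleton, hprod]⟩
      have hlen : cs.length (demazure cs Q * cs.simple s) = L.length + 1 := by
        rcases cs.length_mul_simple (demazure cs Q) s with h | h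
        · rw [h, ← hprod, hred]
        · omega
      rw [CoxeterSystem.IsReduced, cs.wordProd_append, cs.wordProd_singleton, hprod, hlen,
        length_append, length_singleton]
    · exact ⟨L, hsub.trans (sublist_append_left Q [s]), hred, hprod⟩

theorem isFace_iff_isFace_sdiff_image_union_image [Inhabited B] {Q Q' : List B} {emb : ℕ → ℕ}
    (π : W) (hmono : StrictMono emb) (hlt : ∀ i < Q.length, emb i < Q'.length)
    (hletter : ∀ i < Q.length, Q'.getD (emb i) default = Q.getD i default)
    {F : Finset ℕ} (hF : F ⊆ Finset.range Q.length) :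
    IsFace cs Q π F ↔ IsFace cs Q' π
      (Finset.range Q'.length \ (Finset.range Q.length).image emb ∪ F.image emb) := by
  have hsub : Finset.range Q'.length \ (Finset.range Q.length).image emb ∪ F.image emb ⊆
      Finset.range Q'.length :=
    Finset.union_subset Finset.sdiff_subset <| Finset.image_subset_iff.mpr fun i hi =>
      Finset.mem_range.mpr (hlt i (Finset.mem_range.mp (hF hi)))
  rw [IsFace, IsFace, complement_sdiff_image_union_image hmono hlt hletter]
  exact ⟨fun h => ⟨hsub, h.2⟩, fun h => ⟨hF, h.2⟩⟩

end Faces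

variable {B : Type*} [DecidableEq B] [Inhabited B] {W : Type*} [Group W]
variable {M : CoxeterMatrix B} (cs : CoxeterSystem M W)

theorem universality (w₀ : W)
    (c : List B) (hc : IsCoxeterWord c) (wc : List B)
    (Q : List B) (k : ℕ) (hk : Q.length ≤ k)
    (Q' : List B) (hQ' : Q' = List.flatten (List.replicate k c) ++ wc)
    (emb : ℕ → ℕ) (hemb : ∀ i, emb i = i * c.length + c.idxOf (Q.getD i default))
    (G : Finset ℕ) (hG : G = Finset.range Q'.length \ (Finset.range Q.length).image emb) :
    complement Q' G = Q ∧
    (demazure cs Q = w₀ →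
      IsFace cs Q' w₀ G ∧
      ∀ F : Finset ℕ, F ⊆ Finset.range Q.length →
        (IsFace cs Q w₀ F ↔ IsFace cs Q' w₀ (G ∪ F.image emb))) := by
  have hidx : ∀ i, c.idxOf (Q.getD i default) < c.length := fun i =>
    idxOf_lt_length_iff.mpr (hc.2 _)
  have hmono : StrictMono emb := funext hemb ▸ Nat.strictMono_mul_add hidx
  have hlt : ∀ i < Q.length, emb i < Q'.length := fun i hi =>
    calc emb i < k * c.length := by
          rw [hemb, Nat.mul_comm i]
          exact Nat.mul_add_lt_mul_of_lt_of_lt (hi.trans_le hk) (hidx i)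
      _ ≤ Q'.length := by
          simp only [hQ', length_append, length_flatten, map_replicate, sum_replicate,
            smul_eq_mul, Nat.le_add_right]
  have hletter : ∀ i < Q.length, Q'.getD (emb i) default = Q.getD i default := fun i hi => by
    rw [hemb, hQ', List.getD_flatten_replicate_append _ _ _ (hi.trans_le hk) (hidx i),
      getD_eq_getElem _ _ (hidx i), getElem_idxOf]
  subst hG
  have hlink {F : Finset ℕ} (hF : F ⊆ Finset.range Q.length) :=
    isFace_iff_isFace_sdiff_image_union_image cs w₀ hmono hlt hletter hF
  refine ⟨by simpa only [Finset.image_empty, Finset.union_empty, complement_empty] using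
      complement_sdiff_image_union_image hmono hlt hletter ∅, fun hdem => ⟨?_, fun _ hF => hlink hF⟩⟩
  simpa only [Finset.image_empty, Finset.union_empty] using (hlink (Finset.empty_subset _)).1
    ⟨Finset.empty_subset _, by rw [complement_empty, ← hdem]; exact containsReduced_demazure cs Q⟩

end SubwordComplex
end
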